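/- Let I ⊆ R be a cointerval squarefree monomial ideal generated in degree d with minimal generators ordered lexicographically decreasing, and let m = x_{i_1}x_{i_2}⋯x_{i_d} ∈ G(I) with i_1 < ⋯ < i_d. Then set(m) = {j ∈ {1,…,n} : j < i_1, or for some t ≥ 1, i_t < j < i_{t+1} and x_{i_1}⋯x_{i_t}·x_j·x_{i_{t+2}}⋯x_{i_d} ∈ I}. -/

import Mathlib

/-! If `m_i` precedes `m_j` and divides `x_a m_j`, then `x_a` does not divide `m_j`, and since
`m_i` is lex larger of the same degree, some variable `x_{f q}` of `m_j` has index above `a`.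
For the first such `q`, the exchange property applied to `m_j` puts `x_a m_j / x_{f q}` in `I`.
Conversely, if `f (q-1) < a < f q` and `x_a m_j / x_{f q} ∈ I`, this monomial is squarefree of
degree `d`, hence itself a generator; it is lex larger than `m_j` and divides `x_a m_j`. For
`q = 0` the exchange property gives the membership for free, which is why `a < i_1` carries no
further condition. -/

open MvPolynomial

/-- The monomial ideal generated by a set of exponent vectors. -/
noncomputable def genIdeal (K : Type*) [Field K] {n : ℕ} (ms : Set (Fin n →₀ ℕ)) :
    Ideal (MvPolynomial (Fin n) K) :=
  Ideal.span ((fun u => MvPolynomial.monomial u (1 : K)) '' ms)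

/-- The colon ideal `⟨m_1, …, m_{j-1}⟩ : m_j`. -/
noncomputable def colonJ (K : Type*) [Field K] {n k : ℕ} (m : Fin k → (Fin n →₀ ℕ))
    (j : Fin k) : Ideal (MvPolynomial (Fin n) K) :=
  Submodule.colon (genIdeal K {u | ∃ i : Fin k, i < j ∧ u = m i})
    (Ideal.span {MvPolynomial.monomial (m j) (1 : K)})

/-- `I` has linear quotients w.r.t. the ordering `m_1,…,m_k` of its generators:
each colon ideal is generated by a subset of the variables. -/
def HasLinearQuotients (K : Type*) [Field K] {n k : ℕ}
    (m : Fin k → (Fin n →₀ ℕ)) : Prop :=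
  ∀ j : Fin k, ∃ S : Set (Fin n),
    colonJ K m j = Ideal.span ((fun s => (MvPolynomial.X s : MvPolynomial (Fin n) K)) '' S)

/-- `set(m_j) = {i : x_i ∈ ⟨m_1,…,m_{j-1}⟩ : m_j}`. -/
def mset (K : Type*) [Field K] {n k : ℕ} (m : Fin k → (Fin n →₀ ℕ)) (j : Fin k) :
    Set (Fin n) :=
  {t | (MvPolynomial.X t : MvPolynomial (Fin n) K) ∈ colonJ K m j}

/-- The `m i` are minimal monomial generators: none divides another. -/
def MinimalGens {n k : ℕ} (m : Fin k → (Fin n →₀ ℕ)) : Prop :=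
  ∀ i j : Fin k, m i ≤ m j → i = j

/-- `b` is the decomposition function: for a monomial `u ∈ I`, `b u` is the smallest
index `j` with `u ∈ ⟨m_1,…,m_j⟩`. -/
def IsDecompositionFunction (K : Type*) [Field K] {n k : ℕ}
    (m : Fin k → (Fin n →₀ ℕ)) (b : (Fin n →₀ ℕ) → Fin k) : Prop :=
  ∀ u : Fin n →₀ ℕ, MvPolynomial.monomial u (1 : K) ∈ genIdeal K (Set.range m) →
    (MvPolynomial.monomial u (1 : K) ∈ genIdeal K {v | ∃ i : Fin k, i ≤ b u ∧ v = m i}) ∧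
    (∀ j : Fin k,
      MvPolynomial.monomial u (1 : K) ∈ genIdeal K {v | ∃ i : Fin k, i ≤ j ∧ v = m i} →
      b u ≤ j)

/-- The decomposition function is regular: `set(b(x_t·m)) ⊆ set(m)` for every
generator `m` and every `t ∈ set(m)`. -/
def IsRegularDecomp (K : Type*) [Field K] {n k : ℕ}
    (m : Fin k → (Fin n →₀ ℕ)) (b : (Fin n →₀ ℕ) → Fin k) : Prop :=
  ∀ j : Fin k, ∀ t ∈ mset K m j,
    mset K m (b (m j + Finsupp.single t 1)) ⊆ mset K m j

/-- The exponent vector of the squarefree monomial `x_{f 0} ⋯ x_{f (d-1)}`. -/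
noncomputable def vecOfFin {n d : ℕ} (f : Fin d → Fin n) : Fin n →₀ ℕ :=
  ∑ l : Fin d, Finsupp.single (f l) 1

/-- The exchange property defining cointerval ideals: for every squarefree monomial
`x_{i_1}⋯x_{i_d} ∈ I` (`i_1 < … < i_d`), every `t ≤ d` and all `j_1 < … < j_t` with
`j_s ≤ i_s` and `{j_1,…,j_t} ∩ {i_{t+1},…,i_d} = ∅`, the monomial
`x_{j_1}⋯x_{j_t}·x_{i_{t+1}}⋯x_{i_d}` also lies in `I`. -/
def CointervalIdeal (K : Type*) [Field K] {n : ℕ} (d : ℕ)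
    (I : Ideal (MvPolynomial (Fin n) K)) : Prop :=
  ∀ f : Fin d → Fin n, StrictMono f →
    MvPolynomial.monomial (vecOfFin f) (1 : K) ∈ I →
    ∀ (t : ℕ) (ht : t ≤ d), ∀ g : Fin t → Fin n, StrictMono g →
      (∀ s : Fin t, g s ≤ f (Fin.castLE ht s)) →
      (∀ (s : Fin t) (l : Fin d), t ≤ (l : ℕ) → g s ≠ f l) →
      MvPolynomial.monomial
          ((∑ s : Fin t, Finsupp.single (g s) 1) +
            ∑ l ∈ Finset.univ.filter (fun l : Fin d => t ≤ (l : ℕ)),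
              Finsupp.single (f l) 1) (1 : K) ∈ I

/-- `u >_lex v` for exponent vectors: at the smallest index where they differ, `u` is
larger. -/
def lexGt {n : ℕ} (u v : Fin n →₀ ℕ) : Prop :=
  ∃ i : Fin n, (∀ j : Fin n, j < i → u j = v j) ∧ v i < u i

/-- The generators are listed in lexicographically decreasing order. -/
def LexDec {n k : ℕ} (m : Fin k → (Fin n →₀ ℕ)) : Prop :=
  ∀ a b : Fin k, a < b → lexGt (m a) (m b)

/-- `u` is the exponent vector of a squarefree monomial of degree `d`. -/
def SqFreeDeg {n : ℕ} (d : ℕ) (u : Fin n →₀ ℕ) : Prop :=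
  (∀ a : Fin n, u a ≤ 1) ∧ u.support.card = d

lemma mem_genIdeal_iff (K : Type*) [Field K] {n : ℕ} (ms : Set (Fin n →₀ ℕ)) (u : Fin n →₀ ℕ) :
    MvPolynomial.monomial u (1 : K) ∈ genIdeal K ms ↔ ∃ v ∈ ms, v ≤ u := by
  rw [genIdeal, mem_ideal_span_monomial_image]
  simp

lemma monomial_mem_genIdeal_range (K : Type*) [Field K] {n k : ℕ} (m : Fin k → (Fin n →₀ ℕ))
    (j : Fin k) : MvPolynomial.monomial (m j) (1 : K) ∈ genIdeal K (Set.range m) :=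
  (mem_genIdeal_iff K _ _).2 ⟨m j, ⟨j, rfl⟩, le_rfl⟩

lemma mem_mset_iff (K : Type*) [Field K] {n k : ℕ} (m : Fin k → (Fin n →₀ ℕ)) (j : Fin k)
    (a : Fin n) :
    a ∈ mset K m j ↔ ∃ i : Fin k, i < j ∧ m i ≤ Finsupp.single a 1 + m j := by
  change (X a : MvPolynomial (Fin n) K) ∈ colonJ K m j ↔ _
  rw [colonJ, ← Ideal.submodule_span_eq, Submodule.mem_colon_span_singleton, smul_eq_mul, X,
    monomial_mul, one_mul, mem_genIdeal_iff]
  constructor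
  · rintro ⟨v, ⟨i, hij, rfl⟩, hle⟩
    exact ⟨i, hij, hle⟩
  · rintro ⟨i, hij, hle⟩
    exact ⟨m i, ⟨i, hij, rfl⟩, hle⟩

section vecOfFin

variable {n d : ℕ}

lemma vecOfFin_apply {f : Fin d → Fin n} (hf : Function.Injective f) (b : Fin n) :
    vecOfFin f b = if ∃ l, f l = b then 1 else 0 := by
  rw [vecOfFin, ← Finset.sum_image (f := fun b => Finsupp.single b 1) hf.injOn,
    Finsupp.finsetSum_apply]
  simp [Finsupp.single_apply]

lemma sqFreeDeg_vecOfFin {f : Fin d → Fin n} (hf : Function.Injective f) :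
    SqFreeDeg d (vecOfFin f) := by
  refine ⟨fun a => ?_, ?_⟩
  · rw [vecOfFin_apply hf]
    split <;> simp
  · have hsupp : (vecOfFin f).support = Finset.univ.image f := by
      ext b
      simp [vecOfFin_apply hf]
    rw [hsupp, Finset.card_image_of_injective _ hf, Finset.card_univ, Fintype.card_fin]

lemma vecOfFin_update_add_single (f : Fin d → Fin n) (q : Fin d) (a : Fin n) :
    vecOfFin (Function.update f q a) + Finsupp.single (f q) 1 =
      vecOfFin f + Finsupp.single a 1 := by
  classical
  have hsplit := Finset.sum_eq_add_sum_sdiff_singleton_of_mem (Finset.mem_univ q)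
    (fun l => Finsupp.single (f l) (1 : ℕ))
  have hupd : (fun l => Finsupp.single (Function.update f q a l) (1 : ℕ)) =
      Function.update (fun l => Finsupp.single (f l) 1) q (Finsupp.single a 1) :=
    Function.comp_update (fun b => Finsupp.single b 1) f q a
  rw [vecOfFin, vecOfFin, hupd, Finset.sum_update_of_mem (Finset.mem_univ q), hsplit]
  abel

lemma lexGt_vecOfFin_update {f : Fin d → Fin n} {q : Fin d} {a : Fin n} (ha : a < f q) :
    lexGt (vecOfFin (Function.update f q a)) (vecOfFin f) := by
  have key := vecOfFin_update_add_single f q a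
  refine ⟨a, fun b hb => ?_, ?_⟩
  · simpa [Finsupp.single_apply, hb.ne', (hb.trans ha).ne'] using DFunLike.congr_fun key b
  · have := DFunLike.congr_fun key a
    simp [ha.ne'] at this
    omega

end vecOfFin

lemma SqFreeDeg.eq_of_le {n d : ℕ} {u v : Fin n →₀ ℕ} (hu : SqFreeDeg d u) (hv : SqFreeDeg d v)
    (h : u ≤ v) : u = v := by
  have hsupp : u.support = v.support :=
    Finset.eq_of_subset_of_card_le (Finsupp.support_mono h) (by rw [hu.2, hv.2])
  ext b
  by_cases hb : b ∈ v.support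
  · have hb' : b ∈ u.support := hsupp ▸ hb
    rw [Finsupp.mem_support_iff] at hb hb'
    have := hu.1 b; have := hv.1 b; omega
  · have hb' : b ∉ u.support := hsupp ▸ hb
    rw [Finsupp.notMem_support_iff] at hb hb'
    rw [hb, hb']

lemma lexGt_asymm {n : ℕ} {u v : Fin n →₀ ℕ} (huv : lexGt u v) : ¬ lexGt v u := by
  rintro ⟨c, hc, hlt'⟩
  obtain ⟨i, hi, hlt⟩ := huv
  rcases lt_trichotomy i c with h | rfl | h
  · exact (hc i h).not_lt hlt
  · exact lt_asymm hlt hlt'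
  · exact (hi c h).not_lt hlt'

lemma LexDec.lt_of_lexGt {n k : ℕ} {m : Fin k → (Fin n →₀ ℕ)} (hlex : LexDec m) {i j : Fin k}
    (h : lexGt (m i) (m j)) : i < j := by
  rcases lt_trichotomy i j with hij | rfl | hji
  · exact hij
  · obtain ⟨c, -, hc⟩ := h
    exact absurd hc (lt_irrefl _)
  · exact absurd (hlex j i hji) (lexGt_asymm h)

lemma exists_insertion_index {α : Type*} [LinearOrder α] {d : ℕ} {f : Fin d → α} {a : α}
    (ha : a ∉ Set.range f) (hgt : ∃ r, a < f r) : ∃ q, (∀ l < q, f l < a) ∧ a < f q := by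
  obtain ⟨q, hq, hmin⟩ := WellFounded.has_min wellFounded_lt {r | a < f r} hgt
  refine ⟨q, fun l hl => ?_, hq⟩
  exact lt_of_le_of_ne (not_lt.1 fun h => hmin l h hl) fun h => ha ⟨l, h⟩

lemma StrictMono.update_of_insertion {α : Type*} [Preorder α] {d : ℕ} {f : Fin d → α}
    (hf : StrictMono f) {q : Fin d} {a : α} (hlow : ∀ l < q, f l < a) (hhigh : a < f q) :
    StrictMono (Function.update f q a) := by
  intro p r hpr
  rcases eq_or_ne p q with rfl | hp
  · rw [Function.update_self, Function.update_of_ne hpr.ne']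
    exact hhigh.trans (hf hpr)
  rcases eq_or_ne r q with rfl | hr
  · rw [Function.update_of_ne hp, Function.update_self]
    exact hlow p hpr
  · rw [Function.update_of_ne hp, Function.update_of_ne hr]
    exact hf hpr

lemma CointervalIdeal.mem_of_le {K : Type*} [Field K] {n d : ℕ}
    {I : Ideal (MvPolynomial (Fin n) K)} (hco : CointervalIdeal K d I) {f g : Fin d → Fin n}
    (hf : StrictMono f) (hI : MvPolynomial.monomial (vecOfFin f) (1 : K) ∈ I)
    (hg : StrictMono g) (hgf : g ≤ f) :
    MvPolynomial.monomial (vecOfFin g) (1 : K) ∈ I := by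
  have := hco f hf hI d le_rfl g hg (fun s => by simpa using hgf s)
    fun _ l hl => absurd l.isLt (not_lt.2 hl)
  have hnone : Finset.univ.filter (fun l : Fin d => d ≤ (l : ℕ)) = ∅ :=
    Finset.filter_eq_empty_iff.2 fun l _ => not_le.2 l.isLt
  simpa [vecOfFin, hnone] using this

lemma CointervalIdeal.update_mem {K : Type*} [Field K] {n d : ℕ}
    {I : Ideal (MvPolynomial (Fin n) K)} (hco : CointervalIdeal K d I) {f : Fin d → Fin n}
    (hf : StrictMono f) (hI : MvPolynomial.monomial (vecOfFin f) (1 : K) ∈ I) {q : Fin d}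
    {a : Fin n} (hlow : ∀ l < q, f l < a) (hhigh : a < f q) :
    MvPolynomial.monomial (vecOfFin (Function.update f q a)) (1 : K) ∈ I :=
  hco.mem_of_le hf hI (hf.update_of_insertion hlow hhigh) (update_le_self_iff.2 hhigh.le)

section mset

variable {K : Type*} [Field K] {n k d : ℕ} {m : Fin k → (Fin n →₀ ℕ)} {j : Fin k}
  {f : Fin d → Fin n} {a : Fin n}

lemma exists_insertion_of_mem_mset (hsf : ∀ i, SqFreeDeg d (m i)) (hlex : LexDec m)
    (hf : Function.Injective f) (hmj : m j = vecOfFin f) (ha : a ∈ mset K m j) :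
    ∃ q, (∀ l < q, f l < a) ∧ a < f q := by
  obtain ⟨i, hij, hle⟩ := (mem_mset_iff K m j a).1 ha
  obtain ⟨c, hagree, hc⟩ := hlex i j hij
  obtain rfl : c = a := by
    by_contra hne
    have := hle c
    simp [Ne.symm hne] at this
    omega
  have hna : c ∉ Set.range f := fun hmem => by
    have := (hsf i).1 c
    rw [hmj, vecOfFin_apply hf, if_pos (show ∃ l, f l = c from hmem)] at hc
    omega
  refine exists_insertion_index hna ?_
  by_contra! hall
  have hji : m j ≤ m i := fun b => by
    rcases lt_or_ge b c with hb | hb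
    · exact (hagree b hb).ge
    · rw [hmj, vecOfFin_apply hf, if_neg]
      · exact Nat.zero_le _
      rintro ⟨l, rfl⟩
      exact hna ⟨l, le_antisymm (hall l) hb⟩
  exact hc.ne (DFunLike.congr_fun ((hsf j).eq_of_le (hsf i) hji) c)

lemma mem_mset_of_update_mem (hsf : ∀ i, SqFreeDeg d (m i)) (hlex : LexDec m)
    (hmj : m j = vecOfFin f) {q : Fin d} (hinj : Function.Injective (Function.update f q a))
    (hhigh : a < f q)
    (hmem : MvPolynomial.monomial (vecOfFin (Function.update f q a)) (1 : K) ∈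
      genIdeal K (Set.range m)) :
    a ∈ mset K m j := by
  obtain ⟨_, ⟨i, rfl⟩, hle⟩ := (mem_genIdeal_iff K _ _).1 hmem
  have hi : m i = vecOfFin (Function.update f q a) :=
    (hsf i).eq_of_le (sqFreeDeg_vecOfFin hinj) hle
  refine (mem_mset_iff K m j a).2 ⟨i, hlex.lt_of_lexGt ?_, ?_⟩
  · rw [hi, hmj]
    exact lexGt_vecOfFin_update hhigh
  · rw [hi, hmj, add_comm, ← vecOfFin_update_add_single f q a]
    exact le_self_add

lemma mem_mset_iff_exists_update_mem (hsf : ∀ i, SqFreeDeg d (m i)) (hlex : LexDec m)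
    (hco : CointervalIdeal K d (genIdeal K (Set.range m))) (hf : StrictMono f)
    (hmj : m j = vecOfFin f) :
    a ∈ mset K m j ↔ ∃ q, (∀ l < q, f l < a) ∧ a < f q ∧
      MvPolynomial.monomial (vecOfFin (Function.update f q a)) (1 : K) ∈
        genIdeal K (Set.range m) := by
  have hI : MvPolynomial.monomial (vecOfFin f) (1 : K) ∈ genIdeal K (Set.range m) :=
    hmj ▸ monomial_mem_genIdeal_range K m j
  constructor
  · intro ha
    obtain ⟨q, hlow, hhigh⟩ := exists_insertion_of_mem_mset hsf hlex hf.injective hmj ha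
    exact ⟨q, hlow, hhigh, hco.update_mem hf hI hlow hhigh⟩
  · rintro ⟨q, hlow, hhigh, hmem⟩
    exact mem_mset_of_update_mem hsf hlex hmj (hf.update_of_insertion hlow hhigh).injective
      hhigh hmem

end mset

/-- for a cointerval squarefree ideal generated in degree `d` (generators
lex-decreasing) and `m = x_{i_1}⋯x_{i_d} ∈ G(I)` with `i_1 < … < i_d` (here `i_{s+1}`
is `f s`, 0-based), one has
`set(m) = {j : j < i_1, or ∃ t ≥ 1 with i_t < j < i_{t+1} and
x_{i_1}⋯x_{i_t}·x_j·x_{i_{t+2}}⋯x_{i_d} ∈ I}`. -/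
theorem stmt14 (K : Type*) [Field K] {n k d : ℕ} (hd : 0 < d)
    (m : Fin k → (Fin n →₀ ℕ))
    (hsf : ∀ j : Fin k, SqFreeDeg d (m j))
    (hlex : LexDec m)
    (hco : CointervalIdeal K d (genIdeal K (Set.range m)))
    (j : Fin k) (f : Fin d → Fin n) (hf : StrictMono f) (hmj : m j = vecOfFin f) :
    mset K m j =
      {a : Fin n |
        a < f ⟨0, hd⟩ ∨
        ∃ (s : ℕ) (h : s + 1 < d),
          f ⟨s, Nat.lt_of_succ_lt h⟩ < a ∧ a < f ⟨s + 1, h⟩ ∧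
          MvPolynomial.monomial (vecOfFin (Function.update f ⟨s + 1, h⟩ a)) (1 : K) ∈
            genIdeal K (Set.range m)} := by
  have hI : MvPolynomial.monomial (vecOfFin f) (1 : K) ∈ genIdeal K (Set.range m) :=
    hmj ▸ monomial_mem_genIdeal_range K m j
  ext a
  rw [mem_mset_iff_exists_update_mem hsf hlex hco hf hmj]
  constructor
  · rintro ⟨⟨_ | s, hq⟩, hlow, hhigh, hmem⟩
    · exact Or.inl hhigh
    · exact Or.inr ⟨s, hq, hlow _ (Fin.mk_lt_mk.2 s.lt_succ_self), hhigh, hmem⟩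
  · rintro (hhigh | ⟨s, hs, hlow, hhigh, hmem⟩)
    · have hlow : ∀ l < (⟨0, hd⟩ : Fin d), f l < a :=
        fun l hl => absurd (Fin.lt_def.1 hl) (Nat.not_lt_zero _)
      exact ⟨⟨0, hd⟩, hlow, hhigh, hco.update_mem hf hI hlow hhigh⟩
    · refine ⟨⟨s + 1, hs⟩, fun l hl => (hf.monotone ?_).trans_lt hlow, hhigh, hmem⟩
      exact Fin.le_def.2 (Nat.lt_succ_iff.1 hl)
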